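/- arXiv:1904.11871 — 5 statements merged into one kernel-verified Lean document; each statement's English description precedes it below -/
import Mathlib

section
/- Let X_1, X_2, ... be i.i.d. copies of X, let a, b : ℝ → ℝ be measurable with E[a(X)²] < ∞ and E[b(X)²] < ∞, and let v, w, n be positive integers. Define the sample means Ā_m = (1/m)Σ_{i=1}^m a(X_i) and B̄_m = (1/m)Σ_{i=1}^m b(X_i). Then, exactly for every n, n·Cov(Ā_{vn}, B̄_{wn}) = Cov(a(X_1), b(X_1))/max(v,w); moreover, if Var(a(X_1)) > 0 and Var(b(X_1)) > 0, then Cor(Ā_{vn}, B̄_{wn}) = √(min(v,w)/max(v,w))·Cor(a(X_1), b(X_1)). In particular, the asymptotic covariance of √n·Ā_{vn} and √n·B̄_{wn} is 1/max(v,w) times that for equal sample sizes v = w = 1, and the correlation scales by √(min(v,w)/max(v,w)). -/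
open MeasureTheory ProbabilityTheory Filter Topology

noncomputable section

variable {Ω : Type*} [MeasurableSpace Ω]

/-- The cumulative distribution function of `X` under `P`. -/
def cdf' (P : Measure Ω) (X : Ω → ℝ) (x : ℝ) : ℝ := (P {ω | X ω ≤ x}).toReal

/-- The lower quantile of order `p` : `q_X(p) = inf {x : p ≤ F_X x}`. -/
def quantile' (P : Measure Ω) (X : Ω → ℝ) (p : ℝ) : ℝ := sInf {x : ℝ | p ≤ cdf' P X x}

/-- The `k`-th order statistic (1-based) of a list of reals. -/
def orderStat (l : List ℝ) (k : ℕ) : ℝ := (l.insertionSort (· ≤ ·)).getD (k - 1) 0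

/-- The sample quantile `q_n(p) = X_(⌈np⌉)`. -/
def sampleQuantile (X : ℕ → Ω → ℝ) (p : ℝ) (n : ℕ) (ω : Ω) : ℝ :=
  orderStat (List.ofFn fun i : Fin n => X i ω) ⌈(n : ℝ) * p⌉₊

/-- The sample mean `X̄_n`. -/
def sampleMean (X : ℕ → Ω → ℝ) (n : ℕ) (ω : Ω) : ℝ :=
  (∑ i ∈ Finset.range n, X i ω) / n

/-- The (unbiased) sample variance `σ̂_n²`. -/
def sampleVar (X : ℕ → Ω → ℝ) (n : ℕ) (ω : Ω) : ℝ :=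
  (∑ i ∈ Finset.range n, (X i ω - sampleMean X n ω) ^ 2) / ((n : ℝ) - 1)

/-- The sample mean absolute deviation `θ̂_n`. -/
def sampleMAD (X : ℕ → Ω → ℝ) (n : ℕ) (ω : Ω) : ℝ :=
  (∑ i ∈ Finset.range n, |X i ω - sampleMean X n ω|) / n

/-- The `r`-th absolute central sample moment with estimated mean, `m̂(X,n,r)`. -/
def sampleAbsMom (X : ℕ → Ω → ℝ) (r : ℕ) (n : ℕ) (ω : Ω) : ℝ :=
  (∑ i ∈ Finset.range n, |X i ω - sampleMean X n ω| ^ r) / n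

/-- The `r`-th absolute sample moment with known mean `μ`, `m̃(X,n,r)`. -/
def tildeAbsMom (X : ℕ → Ω → ℝ) (μ : ℝ) (r : ℕ) (n : ℕ) (ω : Ω) : ℝ :=
  (∑ i ∈ Finset.range n, |X i ω - μ| ^ r) / n

/-- The sample median `ν̂_n`. -/
def sampleMedian (X : ℕ → Ω → ℝ) (n : ℕ) (ω : Ω) : ℝ :=
  (orderStat (List.ofFn fun i : Fin n => X i ω) ((n + 1) / 2)
    + orderStat (List.ofFn fun i : Fin n => X i ω) ((n + 2) / 2)) / 2

/-- The sample median absolute deviation `ξ̂_n`. -/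
def sampleMedianAD (X : ℕ → Ω → ℝ) (n : ℕ) (ω : Ω) : ℝ :=
  (orderStat (List.ofFn fun i : Fin n => |X i ω - sampleMedian X n ω|) ((n + 1) / 2)
    + orderStat (List.ofFn fun i : Fin n => |X i ω - sampleMedian X n ω|) ((n + 2) / 2)) / 2

/-- Expectation. -/
def expec (P : Measure Ω) (Z : Ω → ℝ) : ℝ := ∫ ω, Z ω ∂P

/-- Covariance. -/
def cov' (P : Measure Ω) (Z W : Ω → ℝ) : ℝ :=
  ∫ ω, (Z ω - expec P Z) * (W ω - expec P W) ∂P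

/-- Pearson correlation. -/
def cor' (P : Measure Ω) (Z W : Ω → ℝ) : ℝ :=
  cov' P Z W / (Real.sqrt (variance Z P) * Real.sqrt (variance W P))

/-- `τ_k(η(X),p) = (1-p) (E[η^k(X) | X > q_X(p)] - E[η^k(X)])`. -/
def tau' (P : Measure Ω) (X : Ω → ℝ) (η : ℝ → ℝ) (k : ℕ) (p : ℝ) : ℝ :=
  (1 - p) * ((∫ ω in {ω | quantile' P X p < X ω}, (η (X ω)) ^ k ∂P)
      / (P {ω | quantile' P X p < X ω}).toReal
    - ∫ ω, (η (X ω)) ^ k ∂P)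

/-- Convergence in distribution: weak convergence of the laws. -/
def TendstoInDistr (P : Measure Ω) {E : Type*} [MeasurableSpace E] [TopologicalSpace E]
    (Z : ℕ → Ω → E) (μ : Measure E) : Prop :=
  ∀ f : BoundedContinuousFunction E ℝ,
    Tendsto (fun n => ∫ ω, f (Z n ω) ∂P) atTop (𝓝 (∫ x, f x ∂μ))

/-- Convergence to `0` in probability. -/
def TendstoInProb (P : Measure Ω) (Z : ℕ → Ω → ℝ) : Prop :=
  ∀ ε : ℝ, 0 < ε → Tendsto (fun n => P {ω | ε ≤ |Z n ω|}) atTop (𝓝 0)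

/-- A centered bivariate Gaussian measure with covariance matrix `(S11 S12; S12 S22)`,
characterized through its one-dimensional linear marginals. -/
def IsCenteredGaussian2 (G : Measure (ℝ × ℝ)) (S11 S12 S22 : ℝ) : Prop :=
  IsProbabilityMeasure G ∧ ∀ a b : ℝ,
    G.map (fun x => a * x.1 + b * x.2)
      = gaussianReal 0 (a ^ 2 * S11 + 2 * a * b * S12 + b ^ 2 * S22).toNNReal

/-- A centered Gaussian measure on `ℝ^d` with covariance matrix `C`,
characterized through its one-dimensional linear marginals. -/
def IsCenteredGaussianVec {d : ℕ} (G : Measure (Fin d → ℝ)) (C : Matrix (Fin d) (Fin d) ℝ) : Prop :=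
  IsProbabilityMeasure G ∧ ∀ a : Fin d → ℝ,
    G.map (fun x => ∑ i, a i * x i)
      = gaussianReal 0 (∑ i, ∑ j, a i * C i j * a j).toNNReal

/-- `X 0, X 1, ...` are i.i.d. under `P`. -/
def IsIIDof (P : Measure Ω) (X : ℕ → Ω → ℝ) : Prop :=
  (∀ i, Measurable (X i)) ∧ iIndepFun X P
    ∧ ∀ i, IdentDistrib (X i) (X 0) P P


/-
By bilinearity, `cov(Ā_m, B̄_k)` is `1/(mk)` times the sum of `cov(a(X_i), b(X_j))`
over `i < m`, `j < k`. Independence kills the off-diagonal terms and identical distribution makes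
each of the `min m k` diagonal terms equal to `cov(a(X_1), b(X_1))`, so
`cov(Ā_m, B̄_k) = cov(a(X_1), b(X_1)) / max m k`. Taking `a = b` gives `Var Ā_m = Var a(X_1) / m`,
and the correlation picks up the factor `√(mk) / max m k = √(min m k / max m k)`.
-/

lemma cov'_eq_covariance (P : Measure Ω) (Z W : Ω → ℝ) : cov' P Z W = cov[Z, W; P] := rfl

lemma Real.sqrt_mul_sqrt_div_max {x y : ℝ} (hx : 0 ≤ x) (hy : 0 ≤ y) :
    √x * √y / max x y = √(min x y / max x y) := calc
  √x * √y / max x y = √(min x y) * √(max x y) / max x y := by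
    rw [← Real.sqrt_mul hx, ← Real.sqrt_mul (le_min hx hy), min_mul_max]
  _ = √(min x y) / √(max x y) := by rw [mul_div_assoc, Real.sqrt_div_self', mul_one_div]
  _ = √(min x y / max x y) := (Real.sqrt_div' _ (hx.trans (le_max_left x y))).symm

lemma ProbabilityTheory.IdentDistrib.covariance_comp_eq {α Ω' : Type*} [MeasurableSpace α]
    [MeasurableSpace Ω'] {μ : Measure Ω} {ν : Measure Ω'} {Y : Ω → α} {Z : Ω' → α}
    (h : IdentDistrib Y Z μ ν) {f g : α → ℝ} (hf : Measurable f) (hg : Measurable g) :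
    cov[fun ω => f (Y ω), fun ω => g (Y ω); μ] = cov[fun ω => f (Z ω), fun ω => g (Z ω); ν] := by
  have hfi : ∫ ω, f (Y ω) ∂μ = ∫ ω, f (Z ω) ∂ν := (h.comp hf).integral_eq
  have hgi : ∫ ω, g (Y ω) ∂μ = ∫ ω, g (Z ω) ∂ν := (h.comp hg).integral_eq
  simp only [covariance, hfi, hgi]
  exact (h.comp ((hf.sub measurable_const).mul (hg.sub measurable_const))).integral_eq

namespace IsIIDof

variable {P : Measure Ω} {X : ℕ → Ω → ℝ}

lemma memLp_comp (hiid : IsIIDof P X) {a : ℝ → ℝ} (ha : Measurable a)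
    (ha2 : MemLp (fun ω => a (X 0 ω)) 2 P) (i : ℕ) : MemLp (fun ω => a (X i ω)) 2 P :=
  ((hiid.2.2 i).comp ha).memLp_iff.mpr ha2

variable {a b : ℝ → ℝ}

lemma covariance_comp (hiid : IsIIDof P X) (ha : Measurable a) (hb : Measurable b)
    (ha2 : MemLp (fun ω => a (X 0 ω)) 2 P) (hb2 : MemLp (fun ω => b (X 0 ω)) 2 P) (i j : ℕ) :
    cov[fun ω => a (X i ω), fun ω => b (X j ω); P]
      = if i = j then cov[fun ω => a (X 0 ω), fun ω => b (X 0 ω); P] else 0 := by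
  split_ifs with hij
  · subst hij
    exact (hiid.2.2 i).covariance_comp_eq ha hb
  · exact ((hiid.2.1.indepFun hij).comp ha hb).covariance_eq_zero
      (hiid.memLp_comp ha ha2 i) (hiid.memLp_comp hb hb2 j)

variable [IsProbabilityMeasure P]

lemma covariance_sampleMean (hiid : IsIIDof P X) (ha : Measurable a) (hb : Measurable b)
    (ha2 : MemLp (fun ω => a (X 0 ω)) 2 P) (hb2 : MemLp (fun ω => b (X 0 ω)) 2 P)
    {m k : ℕ} (hm : 0 < m) (hk : 0 < k) :
    cov[sampleMean (fun i ω => a (X i ω)) m, sampleMean (fun i ω => b (X i ω)) k; P]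
      = cov[fun ω => a (X 0 ω), fun ω => b (X 0 ω); P] / (max m k : ℕ) := by
  have hmk : ((min m k : ℕ) : ℝ) * (max m k : ℕ) = m * k := by exact_mod_cast min_mul_max m k
  have hmax : 0 < ((max m k : ℕ) : ℝ) := by exact_mod_cast lt_max_of_lt_left hm
  unfold sampleMean
  rw [covariance_fun_div_left, covariance_fun_div_right,
    covariance_fun_sum_fun_sum' (fun i _ => hiid.memLp_comp ha ha2 i)
      (fun j _ => hiid.memLp_comp hb hb2 j),
    Finset.sum_congr rfl fun i _ => Finset.sum_congr rfl fun j _ =>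
      hiid.covariance_comp ha hb ha2 hb2 i j]
  simp only [Finset.sum_ite_eq, Finset.sum_ite_mem, Finset.range_inter_range,
    Finset.sum_const, Finset.card_range, nsmul_eq_mul]
  field_simp
  linear_combination cov[fun ω => a (X 0 ω), fun ω => b (X 0 ω); P] * hmk

lemma variance_sampleMean (hiid : IsIIDof P X) (ha : Measurable a)
    (ha2 : MemLp (fun ω => a (X 0 ω)) 2 P) {m : ℕ} (hm : 0 < m) :
    variance (sampleMean (fun i ω => a (X i ω)) m) P = variance (fun ω => a (X 0 ω)) P / m := by
  have hX := hiid.1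
  have hmeas : Measurable (sampleMean (fun i ω => a (X i ω)) m) := by
    unfold sampleMean; fun_prop
  rw [← covariance_self hmeas.aemeasurable, hiid.covariance_sampleMean ha ha ha2 ha2 hm hm,
    max_self, covariance_self (X := fun ω => a (X 0 ω)) (ha.comp (hX 0)).aemeasurable]

lemma cor'_sampleMean (hiid : IsIIDof P X) (ha : Measurable a) (hb : Measurable b)
    (ha2 : MemLp (fun ω => a (X 0 ω)) 2 P) (hb2 : MemLp (fun ω => b (X 0 ω)) 2 P)
    {m k : ℕ} (hm : 0 < m) (hk : 0 < k) :
    cor' P (sampleMean (fun i ω => a (X i ω)) m) (sampleMean (fun i ω => b (X i ω)) k)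
      = √(((min m k : ℕ) : ℝ) / ((max m k : ℕ) : ℝ))
        * cor' P (fun ω => a (X 0 ω)) (fun ω => b (X 0 ω)) := by
  unfold cor'
  rw [cov'_eq_covariance, cov'_eq_covariance, hiid.covariance_sampleMean ha hb ha2 hb2 hm hk,
    hiid.variance_sampleMean ha ha2 hm, hiid.variance_sampleMean hb hb2 hk,
    Real.sqrt_div' _ m.cast_nonneg, Real.sqrt_div' _ k.cast_nonneg, Nat.cast_min, Nat.cast_max,
    ← Real.sqrt_mul_sqrt_div_max m.cast_nonneg k.cast_nonneg]
  simp only [div_eq_mul_inv, mul_inv, inv_inv]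
  ring

end IsIIDof

/-- The exact scaling of covariance and correlation of sample means over overlapping
initial segments of lengths `vn` and `wn` of an i.i.d. sequence. -/
theorem stmt11
    (P : Measure Ω) [IsProbabilityMeasure P]
    (X : ℕ → Ω → ℝ) (hiid : IsIIDof P X)
    (a b : ℝ → ℝ) (ha : Measurable a) (hb : Measurable b)
    (ha2 : MemLp (fun ω => a (X 0 ω)) 2 P) (hb2 : MemLp (fun ω => b (X 0 ω)) 2 P)
    (v w n : ℕ) (hv : 0 < v) (hw : 0 < w) (hn : 0 < n) :
    (n : ℝ) * cov' P
        (fun ω => (∑ i ∈ Finset.range (v * n), a (X i ω)) / (v * n : ℕ))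
        (fun ω => (∑ i ∈ Finset.range (w * n), b (X i ω)) / (w * n : ℕ))
      = cov' P (fun ω => a (X 0 ω)) (fun ω => b (X 0 ω)) / ((max v w : ℕ) : ℝ)
    ∧ (0 < variance (fun ω => a (X 0 ω)) P → 0 < variance (fun ω => b (X 0 ω)) P →
      cor' P (fun ω => (∑ i ∈ Finset.range (v * n), a (X i ω)) / (v * n : ℕ))
          (fun ω => (∑ i ∈ Finset.range (w * n), b (X i ω)) / (w * n : ℕ))
        = Real.sqrt (((min v w : ℕ) : ℝ) / ((max v w : ℕ) : ℝ))
          * cor' P (fun ω => a (X 0 ω)) (fun ω => b (X 0 ω))) := by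
  have hvn : 0 < v * n := Nat.mul_pos hv hn
  have hwn : 0 < w * n := Nat.mul_pos hw hn
  have hn' : (n : ℝ) ≠ 0 := by positivity
  have hcov := hiid.covariance_sampleMean ha hb ha2 hb2 hvn hwn
  have hcor := hiid.cor'_sampleMean ha hb ha2 hb2 hvn hwn
  unfold sampleMean at hcov hcor
  refine ⟨?_, fun _ _ => ?_⟩
  · rw [cov'_eq_covariance, cov'_eq_covariance, hcov, max_mul_mul_right, Nat.cast_mul]
    field_simp
  · rw [hcor, min_mul_mul_right, max_mul_mul_right, Nat.cast_mul, Nat.cast_mul,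
      mul_div_mul_right _ _ hn']
end
end

section
/- Let X be a real random variable with cdf F_X, let ν ∈ ℝ and ξ ≥ 0 satisfy F_X(ν) = 1/2 and F_X(ν+ξ) − F_X(ν−ξ) = 1/2, and let α, c ∈ ℝ. Then Var( α·1_{X ≤ ν} − c·1_{ν−ξ < X ≤ ν+ξ} ) = (1/4)·( c² + γ ), where γ := α² − 4αc·(1 − F_X(ν−ξ) − F_X(ν+ξ)). -/
open MeasureTheory ProbabilityTheory Filter Topology

noncomputable section

variable {Ω : Type*} [MeasurableSpace Ω]

/-! The variable is `α • 1_A - c • 1_B` with `A = {X ≤ ν}`, `B = {ν - ξ < X ≤ ν + ξ}`, whose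
variance only involves `P A`, `P B` and `P (A ∩ B)`. The two median conditions give
`P A = P B = 1/2`, and `ξ ≥ 0` makes `A ∩ B = {ν - ξ < X ≤ ν}`, of probability `1/2 - F_X(ν - ξ)`. -/

lemma sq_indicator_const_sub_indicator_const {α : Type*} {A B : Set α} (a b : ℝ) :
    (A.indicator (fun _ => a) - B.indicator (fun _ => b)) ^ 2
      = A.indicator (fun _ => a ^ 2) - (A ∩ B).indicator (fun _ => 2 * a * b)
        + B.indicator (fun _ => b ^ 2) := by
  ext ω
  by_cases hA : ω ∈ A <;> by_cases hB : ω ∈ B <;> simp [hA, hB, sub_sq]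

lemma variance_indicator_const_sub_indicator_const {P : Measure Ω} [IsProbabilityMeasure P]
    {A B : Set Ω} (hA : MeasurableSet A) (hB : MeasurableSet B) (a b : ℝ) :
    variance (A.indicator (fun _ => a) - B.indicator (fun _ => b)) P
      = a ^ 2 * P.real A + b ^ 2 * P.real B - 2 * a * b * P.real (A ∩ B)
        - (a * P.real A - b * P.real B) ^ 2 := by
  have hint : ∀ {S : Set Ω} (e : ℝ), MeasurableSet S → Integrable (S.indicator fun _ => e) P :=
    fun e hS => (integrable_const e).indicator hS
  rw [variance_eq_sub ((memLp_indicator_const 2 hA a (.inr (measure_ne_top P _))).sub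
      (memLp_indicator_const 2 hB b (.inr (measure_ne_top P _)))),
    sq_indicator_const_sub_indicator_const,
    integral_add' ((hint _ hA).sub (hint _ (hA.inter hB))) (hint _ hB),
    integral_sub' (hint _ hA) (hint _ (hA.inter hB)), integral_sub' (hint _ hA) (hint _ hB)]
  simp only [integral_indicator_const _ hA, integral_indicator_const _ hB,
    integral_indicator_const _ (hA.inter hB), smul_eq_mul]
  ring

lemma measureReal_Ioc_preimage_eq_cdf'_sub {P : Measure Ω} [IsFiniteMeasure P]
    {X : Ω → ℝ} (hX : Measurable X) {x y : ℝ} (hxy : x ≤ y) :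
    P.real {ω | x < X ω ∧ X ω ≤ y} = cdf' P X y - cdf' P X x := by
  have hset : {ω | x < X ω ∧ X ω ≤ y} = {ω | X ω ≤ y} \ {ω | X ω ≤ x} := by
    ext ω
    simp only [Set.mem_ofPred_eq, Set.mem_sdiff, not_le]
    tauto
  rw [hset, measureReal_sdiff (Set.ofPred_subset_ofPred.2 fun ω h => h.trans hxy)
    (measurableSet_le hX measurable_const)]
  rfl

/-- Variance of `α·1_{X ≤ ν} − c·1_{ν−ξ < X ≤ ν+ξ}` for a median `ν` and MedianAD `ξ`. -/
theorem stmt13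
    (P : Measure Ω) [IsProbabilityMeasure P]
    (X : Ω → ℝ) (hX : Measurable X)
    (ν ξ : ℝ) (hξ : 0 ≤ ξ)
    (hmed : cdf' P X ν = 1/2)
    (hmad : cdf' P X (ν + ξ) - cdf' P X (ν - ξ) = 1/2)
    (α c : ℝ) :
    variance (fun ω => α * (if X ω ≤ ν then (1:ℝ) else 0)
        - c * (if ν - ξ < X ω ∧ X ω ≤ ν + ξ then (1:ℝ) else 0)) P
      = (c ^ 2 + (α ^ 2
          - 4 * α * c * (1 - cdf' P X (ν - ξ) - cdf' P X (ν + ξ)))) / 4 := by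
  set A := {ω | X ω ≤ ν}
  set B := {ω | ν - ξ < X ω ∧ X ω ≤ ν + ξ}
  have hA : MeasurableSet A := measurableSet_le hX measurable_const
  have hB : MeasurableSet B :=
    (measurableSet_lt measurable_const hX).inter (measurableSet_le hX measurable_const)
  have hAB : A ∩ B = {ω | ν - ξ < X ω ∧ X ω ≤ ν} := by
    ext ω
    simp only [A, B, Set.mem_inter_iff, Set.mem_ofPred_eq]
    constructor
    · rintro ⟨h₁, h₂, -⟩; exact ⟨h₂, h₁⟩
    · rintro ⟨h₁, h₂⟩; exact ⟨h₂, h₁, by linarith⟩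
  have hfun : (fun ω => α * (if X ω ≤ ν then (1:ℝ) else 0)
        - c * (if ν - ξ < X ω ∧ X ω ≤ ν + ξ then (1:ℝ) else 0))
      = A.indicator (fun _ => α) - B.indicator (fun _ => c) := by
    ext ω
    simp [Set.indicator_apply, A, B]
  have hPA : P.real A = 1 / 2 := hmed
  have hPB : P.real B = 1 / 2 :=
    (measureReal_Ioc_preimage_eq_cdf'_sub hX (by linarith)).trans hmad
  have hPAB : P.real (A ∩ B) = 1 / 2 - cdf' P X (ν - ξ) := by
    rw [hAB, measureReal_Ioc_preimage_eq_cdf'_sub hX (by linarith), hmed]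
  rw [hfun, variance_indicator_const_sub_indicator_const hA hB, hPA, hPB, hPAB]
  linear_combination (-α * c) * hmad
end
end

section
/- Let X be a real random variable with cdf F_X, let p ∈ (0,1) and q = q_X(p) satisfy F_X(q) = p, let ν ∈ ℝ and ξ ≥ 0 satisfy F_X(ν) = 1/2 and F_X(ν+ξ) − F_X(ν−ξ) = 1/2, and let α, c ∈ ℝ. Then Cov( 1_{X > q}, α·1_{X ≤ ν} − c·1_{ν−ξ < X ≤ ν+ξ} ) = α·max(−p/2, (p−1)/2) − c·( max(0, F_X(ν+ξ) − max(F_X(ν−ξ), p)) − (1−p)/2 ). -/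
open MeasureTheory ProbabilityTheory Filter Topology

noncomputable section

variable {Ω : Type*} [MeasurableSpace Ω]

lemma memLp_indicator_one {μ : Measure Ω} [IsFiniteMeasure μ] {S : Set Ω} (hS : MeasurableSet S)
    (p : ENNReal) : MemLp (S.indicator (1 : Ω → ℝ)) p μ :=
  memLp_indicator_const p hS 1 (.inr (measure_ne_top _ _))

lemma covariance_indicator_one {μ : Measure Ω} [IsProbabilityMeasure μ] {A B : Set Ω}
    (hA : MeasurableSet A) (hB : MeasurableSet B) :
    cov[A.indicator 1, B.indicator 1; μ] = μ.real (A ∩ B) - μ.real A * μ.real B := by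
  rw [covariance_eq_sub (memLp_indicator_one hA 2) (memLp_indicator_one hB 2),
    ← Set.inter_indicator_one, integral_indicator_one hA, integral_indicator_one hB,
    integral_indicator_one (hA.inter hB)]

omit [MeasurableSpace Ω] in
lemma setOf_indicator_one {M : Type*} [Zero M] [One M] (p : Ω → Prop) [DecidablePred p] :
    {ω | p ω}.indicator (1 : Ω → M) = fun ω => if p ω then 1 else 0 := by
  ext ω; simp [Set.indicator_apply]

section cdf

variable {P : Measure Ω} [IsProbabilityMeasure P] {X : Ω → ℝ}

lemma cdf'_mono : Monotone (cdf' P X) := fun _ _ h =>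
  measureReal_mono fun _ hω => le_trans hω h

lemma measureReal_lt_eq_one_sub_cdf' (hX : Measurable X) (a : ℝ) :
    P.real {ω | a < X ω} = 1 - cdf' P X a := by
  have hcompl : {ω | a < X ω} = {ω | X ω ≤ a}ᶜ := by ext; simp
  rw [hcompl, probReal_compl_eq_one_sub (measurableSet_le hX measurable_const)]
  rfl

lemma measureReal_Ioc_eq_cdf' (hX : Measurable X) (a b : ℝ) :
    P.real {ω | a < X ω ∧ X ω ≤ b} = max 0 (cdf' P X b - cdf' P X a) := by
  rcases le_or_gt b a with hba | hab
  · have hempty : {ω | a < X ω ∧ X ω ≤ b} = ∅ := by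
      ext ω; simp only [Set.mem_ofPred_eq, Set.mem_empty_iff_false, iff_false, not_and, not_le]
      intro h; linarith
    rw [hempty, measureReal_empty, max_eq_left (sub_nonpos.2 (cdf'_mono hba))]
  · have hdiff : {ω | a < X ω ∧ X ω ≤ b} = {ω | X ω ≤ b} \ {ω | X ω ≤ a} := by
      ext ω; simp only [Set.mem_ofPred_eq, Set.mem_sdiff, not_le]; tauto
    rw [hdiff, measureReal_sdiff (μ := P) (s₁ := {ω | X ω ≤ b}) (s₂ := {ω | X ω ≤ a})
      (fun ω hω => le_trans hω hab.le) (measurableSet_le hX measurable_const),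
      max_eq_right (sub_nonneg.2 (cdf'_mono hab.le))]
    rfl

end cdf

theorem stmt14_general
    (P : Measure Ω) [IsProbabilityMeasure P]
    (X : Ω → ℝ) (hX : Measurable X)
    (p : ℝ)
    (q : ℝ) (hFq : cdf' P X q = p)
    (ν ξ : ℝ)
    (hmed : cdf' P X ν = 1/2)
    (hmad : cdf' P X (ν + ξ) - cdf' P X (ν - ξ) = 1/2)
    (α c : ℝ) :
    cov' P (fun ω => if q < X ω then (1:ℝ) else 0)
        (fun ω => α * (if X ω ≤ ν then (1:ℝ) else 0)
          - c * (if ν - ξ < X ω ∧ X ω ≤ ν + ξ then (1:ℝ) else 0))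
      = α * max (-(p / 2)) ((p - 1) / 2)
        - c * (max 0 (cdf' P X (ν + ξ) - max (cdf' P X (ν - ξ)) p) - (1 - p) / 2) := by
  set A := {ω | q < X ω}
  set B := {ω | X ω ≤ ν}
  set C := {ω | ν - ξ < X ω ∧ X ω ≤ ν + ξ}
  have hA : MeasurableSet A := measurableSet_lt measurable_const hX
  have hB : MeasurableSet B := measurableSet_le hX measurable_const
  have hC : MeasurableSet C :=
    (measurableSet_lt measurable_const hX).inter (measurableSet_le hX measurable_const)
  have hAB : A ∩ B = {ω | q < X ω ∧ X ω ≤ ν} := rfl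
  have hAC : A ∩ C = {ω | max q (ν - ξ) < X ω ∧ X ω ≤ ν + ξ} := by
    ext; simp [A, C, and_assoc]
  have hW : (fun ω => α * (if X ω ≤ ν then (1:ℝ) else 0)
      - c * (if ν - ξ < X ω ∧ X ω ≤ ν + ξ then (1:ℝ) else 0))
      = fun ω => α * B.indicator 1 ω - c * C.indicator 1 ω := by
    simp only [B, C, setOf_indicator_one]
  rw [cov'_eq_covariance, ← setOf_indicator_one, hW, covariance_fun_sub_right
      (memLp_indicator_one hA 2) ((memLp_indicator_one hB 2).const_mul α)
      ((memLp_indicator_one hC 2).const_mul c),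
    covariance_const_mul_right, covariance_const_mul_right,
    covariance_indicator_one hA hB, covariance_indicator_one hA hC, hAB, hAC,
    measureReal_Ioc_eq_cdf' hX q ν, measureReal_Ioc_eq_cdf' hX, measureReal_lt_eq_one_sub_cdf' hX,
    cdf'_mono.map_max]
  have hPB : P.real B = 1 / 2 := hmed
  have hPC : P.real C = 1 / 2 := by
    rw [measureReal_Ioc_eq_cdf' hX, hmad, max_eq_right (by norm_num)]
  have hmax : max 0 (1 / 2 - p) - (1 - p) * (1 / 2) = max (-(p / 2)) ((p - 1) / 2) := by
    rw [← max_sub_sub_right, max_comm]; ring_nf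
  rw [hPB, hPC, hFq, hmed, max_comm p, hmax]
  ring

/-- Covariance of `1_{X > q}` with `α·1_{X ≤ ν} − c·1_{ν−ξ < X ≤ ν+ξ}`. -/
theorem stmt14
    (P : Measure Ω) [IsProbabilityMeasure P]
    (X : Ω → ℝ) (hX : Measurable X)
    (p : ℝ) (hp : p ∈ Set.Ioo (0:ℝ) 1)
    (q : ℝ) (hq : q = quantile' P X p) (hFq : cdf' P X q = p)
    (ν ξ : ℝ) (hξ : 0 ≤ ξ)
    (hmed : cdf' P X ν = 1/2)
    (hmad : cdf' P X (ν + ξ) - cdf' P X (ν - ξ) = 1/2)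
    (α c : ℝ) :
    cov' P (fun ω => if q < X ω then (1:ℝ) else 0)
        (fun ω => α * (if X ω ≤ ν then (1:ℝ) else 0)
          - c * (if ν - ξ < X ω ∧ X ω ≤ ν + ξ then (1:ℝ) else 0))
      = α * max (-(p / 2)) ((p - 1) / 2)
        - c * (max 0 (cdf' P X (ν + ξ) - max (cdf' P X (ν - ξ)) p) - (1 - p) / 2) :=
  stmt14_general P X hX p q hFq ν ξ hmed hmad α c
end
end

section
/- Let X be a real random variable with mean μ, variance σ² > 0 and cdf F_X, set Y = (X−μ)/σ with cdf F_Y, and let r ∈ {1,2} with E[|X|^{r+1}] < ∞. Then Cov( X, |X−μ|^r + (2−r)(2F_X(μ)−1)(X−μ) ) = σ^{r+1}·( E[Y^{r+1}] + (2−r)·( 2F_Y(0) − 1 − 2·E[Y^{r+1}·1_{Y<0}] ) ). -/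
open MeasureTheory ProbabilityTheory Filter Topology

noncomputable section

variable {Ω : Type*} [MeasurableSpace Ω]

/-! Write `Z = X - μ`. Since `E Z = 0`, the covariance reduces to `E[Z |Z|^r] + c σ²` with
`c = (2 - r)(2 F_X(μ) - 1)`. For even `r` this is `E Z^(r+1)`, while for odd `r` the sign of `Z`
splits off `-2 E[Z^(r+1); Z < 0]`; passing to `Y = Z / σ` only rescales `Z^(r+1)` by `σ^(r+1)`
and maps the event `{X ≤ μ}` to `{Y ≤ 0}`. -/

section Moments

variable {ν : Measure Ω}

lemma integrable_abs_sub_const_pow [IsFiniteMeasure ν] {X : Ω → ℝ}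
    (hX : AEStronglyMeasurable X ν) {n : ℕ} (hn : n ≠ 0)
    (h : Integrable (fun ω => |X ω| ^ n) ν) (c : ℝ) :
    Integrable (fun ω => |X ω - c| ^ n) ν := by
  have hXn : MemLp X n ν :=
    (integrable_norm_rpow_iff hX (by exact_mod_cast hn) (ENNReal.natCast_ne_top n)).1
      (by simpa [Real.rpow_natCast] using h)
  simpa using (hXn.sub (memLp_const c)).integrable_norm_pow hn

lemma mul_abs_pow_of_even {r : ℕ} (hr : Even r) (z : ℝ) : z * |z| ^ r = z ^ (r + 1) := by
  rw [hr.pow_abs, pow_succ']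

lemma mul_abs_pow_of_odd {r : ℕ} (hr : Odd r) (z : ℝ) :
    z * |z| ^ r = z ^ (r + 1) - 2 * if z < 0 then z ^ (r + 1) else 0 := by
  split_ifs with hz
  · rw [abs_of_neg hz, hr.neg_pow, pow_succ']
    ring
  · rw [abs_of_nonneg (not_lt.1 hz), pow_succ']
    ring

lemma integrable_mul_abs_pow {Z : Ω → ℝ} (hZ : AEStronglyMeasurable Z ν) {r : ℕ}
    (h : Integrable (fun ω => |Z ω| ^ (r + 1)) ν) :
    Integrable (fun ω => Z ω * |Z ω| ^ r) ν :=
  h.mono' (hZ.mul (hZ.norm.pow r)) (ae_of_all _ fun ω => by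
    rw [Real.norm_eq_abs, abs_mul, abs_pow, abs_abs, pow_succ'])

lemma integral_mul_abs_pow_of_odd {Z : Ω → ℝ} (hZ : Measurable Z) {r : ℕ} (hr : Odd r)
    (h : Integrable (fun ω => |Z ω| ^ (r + 1)) ν) :
    ∫ ω, Z ω * |Z ω| ^ r ∂ν
      = ∫ ω, Z ω ^ (r + 1) ∂ν - 2 * ∫ ω in {ω | Z ω < 0}, Z ω ^ (r + 1) ∂ν := by
  have hs : MeasurableSet {ω | Z ω < 0} := measurableSet_lt hZ measurable_const
  have hpow : Integrable (fun ω => Z ω ^ (r + 1)) ν :=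
    h.mono' (hZ.pow_const _).aestronglyMeasurable
      (ae_of_all _ fun ω => by rw [Real.norm_eq_abs, abs_pow])
  rw [← integral_indicator hs, ← integral_const_mul, ← integral_sub hpow
    ((hpow.indicator hs).const_mul 2)]
  congr with ω
  simp [mul_abs_pow_of_odd hr, Set.indicator_apply]

lemma integral_div_const_pow (f : Ω → ℝ) (c : ℝ) (k : ℕ) :
    ∫ ω, (f ω / c) ^ k ∂ν = (∫ ω, f ω ^ k ∂ν) / c ^ k := by
  simp_rw [div_pow]
  exact integral_div _ _

end Moments

lemma setOf_standardize_neg {α : Type*} {X : α → ℝ} {μ σ : ℝ} (hσ : 0 < σ) :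
    {a | (X a - μ) / σ < 0} = {a | X a < μ} := by
  ext a
  simp [div_neg_iff, hσ, not_lt_of_gt hσ]

section Standardization

variable {P : Measure Ω} {X : Ω → ℝ} {μ σ : ℝ}

lemma cdf'_standardize_zero (hσ : 0 < σ) :
    cdf' P (fun ω => (X ω - μ) / σ) 0 = cdf' P X μ := by
  simp only [cdf', div_nonpos_iff, hσ.le, sub_nonpos, not_le.2 hσ]
  simp

lemma variance_eq_integral_sub_sq (hX : AEMeasurable X P) (hmean : expec P X = μ) :
    variance X P = ∫ ω, (X ω - μ) ^ 2 ∂P := by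
  rw [variance_eq_integral hX, ← hmean, expec]

end Standardization

section Covariance

variable {P : Measure Ω} [IsProbabilityMeasure P] {X : Ω → ℝ} {μ : ℝ}

lemma cov'_eq_integral_sub_mul (hX : Integrable X P) (hmean : expec P X = μ) {W : Ω → ℝ}
    (hXW : Integrable (fun ω => (X ω - μ) * W ω) P) :
    cov' P X W = ∫ ω, (X ω - μ) * W ω ∂P := by
  have hZ : Integrable (fun ω => X ω - μ) P := hX.sub (integrable_const μ)
  have hcentered : ∫ ω, (X ω - μ) ∂P = 0 := by
    rw [integral_sub hX (integrable_const μ), ← expec, hmean, integral_const, probReal_univ,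
      one_smul, sub_self]
  rw [cov', hmean]
  simp_rw [mul_sub]
  rw [integral_sub hXW (hZ.mul_const _), integral_mul_const,
    hcentered, zero_mul, sub_zero]

lemma cov'_abs_pow_add_mul (hX : Integrable X P) (hmean : expec P X = μ) {r : ℕ} (hr : r ≠ 0)
    (hmom : Integrable (fun ω => |X ω - μ| ^ (r + 1)) P) (c : ℝ) :
    cov' P X (fun ω => |X ω - μ| ^ r + c * (X ω - μ))
      = ∫ ω, (X ω - μ) * |X ω - μ| ^ r ∂P + c * variance X P := by
  have hZ : AEStronglyMeasurable (fun ω => X ω - μ) P := hX.1.sub aestronglyMeasurable_const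
  have hmul := integrable_mul_abs_pow hZ hmom
  have hsq : Integrable (fun ω => (X ω - μ) ^ 2) P := by
    simpa using integrable_norm_pow_of_le hZ (by omega : 2 ≤ r + 1) (by simpa using hmom)
  have hexpand : (fun ω => (X ω - μ) * (|X ω - μ| ^ r + c * (X ω - μ)))
      = fun ω => (X ω - μ) * |X ω - μ| ^ r + c * (X ω - μ) ^ 2 := by
    funext ω
    ring
  rw [cov'_eq_integral_sub_mul hX hmean (hexpand ▸ hmul.add (hsq.const_mul c)), hexpand,
    integral_add hmul (hsq.const_mul c), integral_const_mul,
    variance_eq_integral_sub_sq hX.aemeasurable hmean]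

end Covariance

/-- Covariance of `X` with `|X−μ|^r + (2−r)(2F_X(μ)−1)(X−μ)` in standardized form. -/
theorem stmt15
    (P : Measure Ω) [IsProbabilityMeasure P]
    (X : Ω → ℝ) (hX : Measurable X)
    (μ σ : ℝ) (hσpos : 0 < σ)
    (hint : Integrable X P) (hmean : expec P X = μ) (hvar : variance X P = σ ^ 2)
    (Y : Ω → ℝ) (hY : ∀ ω, Y ω = (X ω - μ) / σ)
    (r : ℕ) (hr : r = 1 ∨ r = 2)
    (hmom : Integrable (fun ω => |X ω| ^ (r + 1)) P) :
    cov' P X (fun ω => |X ω - μ| ^ r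
        + (2 - (r : ℝ)) * (2 * cdf' P X μ - 1) * (X ω - μ))
      = σ ^ (r + 1) * (expec P (fun ω => Y ω ^ (r + 1))
        + (2 - (r : ℝ)) * (2 * cdf' P Y 0 - 1
          - 2 * ∫ ω in {ω | Y ω < 0}, Y ω ^ (r + 1) ∂P)) := by
  obtain rfl : Y = fun ω => (X ω - μ) / σ := funext hY
  have hmom' := integrable_abs_sub_const_pow hX.aestronglyMeasurable (by omega) hmom μ
  rw [cov'_abs_pow_add_mul hint hmean (by omega) hmom', hvar, cdf'_standardize_zero hσpos,
    setOf_standardize_neg hσpos, expec, integral_div_const_pow, integral_div_const_pow]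
  rcases hr with rfl | rfl
  · rw [integral_mul_abs_pow_of_odd (hX.sub_const μ) odd_one hmom',
      ← variance_eq_integral_sub_sq hX.aemeasurable hmean, hvar]
    simp_rw [sub_neg]
    field_simp
    ring
  · simp_rw [mul_abs_pow_of_even even_two]
    field_simp
    ring
end
end

section
/- Let g : (0,1) → ℝ be differentiable, let μ ∈ ℝ, let r ≥ 1 be an integer and p ∈ (0,1). Assume t ↦ |g(t)−μ|^r is integrable on (0,1), that t ↦ r·|g(t)−μ|^{r−1}·sgn(g(t)−μ)·g'(t)·(min(p,t) − p·t) is integrable on (0,1), and that the boundary terms vanish: t·|g(t)−μ|^r → 0 as t → 0⁺ and (1−t)·|g(t)−μ|^r → 0 as t → 1⁻. Then ∫₀¹ r·|g(t)−μ|^{r−1}·sgn(g(t)−μ)·g'(t)·(min(p,t) − p·t) dt = p·∫_p¹ |g(t)−μ|^r dt − (1−p)·∫₀^p |g(t)−μ|^r dt. -/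
open MeasureTheory ProbabilityTheory Filter Topology

noncomputable section

variable {Ω : Type*} [MeasurableSpace Ω]

/-! On `(0, p)` and on `(p, 1)` the kernel `min p t - p * t` is affine, so the identity is two
integrations by parts: the boundary terms at `p` cancel and those at `0` and `1` vanish by
assumption. The function `|g - μ| ^ r` is differentiable, with the derivative in the integrand,
except where `g = μ` and `g' ≠ 0`; these points are isolated zeros of `g - μ`, hence countably
many, which the fundamental theorem of calculus tolerates. -/

section

open Set

theorem countable_setOf_hasDerivAt_eq_of_ne_zero (f f' : ℝ → ℝ) (c : ℝ) :
    {x | HasDerivAt f (f' x) x ∧ f x = c ∧ f' x ≠ 0}.Countable := by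
  refine (HereditarilyLindelofSpace.isLindelof _).countable_of_isDiscrete <|
    isDiscrete_iff_nhdsNE.2 fun x hx => inf_principal_eq_bot.2 ?_
  filter_upwards [hx.1.eventually_ne (c := c) hx.2.2] with y hy hys using hy hys.2.1

theorem HasDerivAt.abs_of_ne_zero_or {f : ℝ → ℝ} {f' x : ℝ} (hf : HasDerivAt f f' x)
    (h : f x ≠ 0 ∨ f' = 0) : HasDerivAt (fun y => |f y|) (Real.sign (f x) * f') x := by
  rcases lt_trichotomy (f x) 0 with hneg | hzero | hpos
  · rw [Real.sign_of_neg hneg]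
    exact (hasDerivAt_abs_neg hneg).comp x hf
  · obtain rfl : f' = 0 := h.resolve_left (not_not.2 hzero)
    rw [mul_zero, hasDerivAt_iff_isLittleO]
    simpa [hzero] using (hasDerivAt_iff_isLittleO.1 hf).norm_left
  · rw [Real.sign_of_pos hpos]
    exact (hasDerivAt_abs_pos hpos).comp x hf

theorem HasDerivAt.abs_pow {f : ℝ → ℝ} {f' x : ℝ} (hf : HasDerivAt f f' x)
    (h : f x ≠ 0 ∨ f' = 0) (r : ℕ) :
    HasDerivAt (fun y => |f y| ^ r) (r * |f x| ^ (r - 1) * Real.sign (f x) * f') x := by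
  simpa only [mul_assoc] using (hf.abs_of_ne_zero_or h).fun_pow r

theorem intervalIntegral.integral_eq_sub_of_hasDerivAt_off_countable_of_tendsto
    {E : Type*} [NormedAddCommGroup E] [NormedSpace ℝ E] [CompleteSpace E]
    {f f' : ℝ → E} {a b : ℝ} {fa fb : E} (hab : a < b) {s : Set ℝ} (hs : s.Countable)
    (hcont : ContinuousOn f (Ioo a b)) (hderiv : ∀ x ∈ Ioo a b \ s, HasDerivAt f (f' x) x)
    (hint : IntervalIntegrable f' volume a b)
    (ha : Tendsto f (𝓝[>] a) (𝓝 fa)) (hb : Tendsto f (𝓝[<] b) (𝓝 fb)) :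
    ∫ y in a..b, f' y = fb - fa := by
  set F : ℝ → E := Function.update (Function.update f a fa) b fb
  have hFf : EqOn F f (Ioo a b) := fun x hx => by
    simp only [F, Function.update_of_ne hx.2.ne, Function.update_of_ne hx.1.ne']
  have Fderiv : ∀ x ∈ Ioo a b \ s, HasDerivAt F (f' x) x := fun x hx =>
    (hderiv x hx).congr_of_eventuallyEq <| hFf.eventuallyEq_of_mem (Ioo_mem_nhds hx.1.1 hx.1.2)
  have Fcont : ContinuousOn F (Icc a b) := by
    rw [continuousOn_update_iff, continuousOn_update_iff, Icc_sdiff_right, Ico_sdiff_left]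
    refine ⟨⟨hcont, fun _ => ha.mono_left (nhdsWithin_mono _ Ioo_subset_Ioi_self)⟩, ?_⟩
    rintro -
    refine (hb.congr' ?_).mono_left (nhdsWithin_mono _ Ico_subset_Iio_self)
    filter_upwards [Ioo_mem_nhdsLT hab] with _ hz using (Function.update_of_ne hz.1.ne' _ _).symm
  simpa [F, hab.ne, hab.ne'] using
    integral_eq_of_hasDerivAt_off_countable_of_le F f' hab.le hs Fcont Fderiv hint

theorem setIntegral_Ioo_deriv_mul_affine {φ φ' : ℝ → ℝ} {a b A B : ℝ} (c d : ℝ) (hab : a < b)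
    {s : Set ℝ} (hs : s.Countable) (hcont : ContinuousOn φ (Ioo a b))
    (hderiv : ∀ x ∈ Ioo a b \ s, HasDerivAt φ (φ' x) x) (hint : IntegrableOn φ (Ioo a b))
    (hint' : IntegrableOn (fun t => φ' t * (c * t + d)) (Ioo a b))
    (ha : Tendsto (fun t => φ t * (c * t + d)) (𝓝[>] a) (𝓝 A))
    (hb : Tendsto (fun t => φ t * (c * t + d)) (𝓝[<] b) (𝓝 B)) :
    ∫ t in Ioo a b, φ' t * (c * t + d) = B - A - c * ∫ t in Ioo a b, φ t := by
  have hweight (x : ℝ) : HasDerivAt (fun t => c * t + d) c x := by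
    simpa using ((hasDerivAt_id x).const_mul c).add_const d
  have hftc := intervalIntegral.integral_eq_sub_of_hasDerivAt_off_countable_of_tendsto hab hs
    (hcont.mul (by fun_prop)) (fun x hx => (hderiv x hx).mul (hweight x))
    ((intervalIntegrable_iff_integrableOn_Ioo_of_le hab.le).2 (hint'.add (hint.mul_const c))) ha hb
  rw [intervalIntegral.integral_of_le hab.le, integral_Ioc_eq_integral_Ioo,
    integral_add hint' (hint.mul_const c), integral_mul_const] at hftc
  linarith

theorem setIntegral_deriv_mul_brownianBridgeCov {φ φ' : ℝ → ℝ} {p : ℝ} (hp : p ∈ Ioo (0 : ℝ) 1)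
    {s : Set ℝ} (hs : s.Countable) (hcont : ContinuousOn φ (Ioo 0 1))
    (hderiv : ∀ x ∈ Ioo 0 1 \ s, HasDerivAt φ (φ' x) x) (hint : IntegrableOn φ (Ioo 0 1))
    (hint' : IntegrableOn (fun t => φ' t * (min p t - p * t)) (Ioo 0 1))
    (h0 : Tendsto (fun t => t * φ t) (𝓝[>] 0) (𝓝 0))
    (h1 : Tendsto (fun t => (1 - t) * φ t) (𝓝[<] 1) (𝓝 0)) :
    ∫ t in Ioo 0 1, φ' t * (min p t - p * t)
      = p * (∫ t in Ioo p 1, φ t) - (1 - p) * ∫ t in Ioo 0 p, φ t := by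
  obtain ⟨hp0, hp1⟩ := hp
  have hleft_sub : Ioo 0 p ⊆ Ioo (0 : ℝ) 1 := Ioo_subset_Ioo_right hp1.le
  have hright_sub : Ioo p 1 ⊆ Ioo (0 : ℝ) 1 := Ioo_subset_Ioo_left hp0.le
  have hkernel_left : EqOn (fun t => φ' t * (min p t - p * t)) (fun t => φ' t * ((1 - p) * t + 0))
      (Ioo 0 p) := fun t ht => by simp only [min_eq_right ht.2.le]; ring
  have hkernel_right : EqOn (fun t => φ' t * (min p t - p * t)) (fun t => φ' t * (-p * t + p))
      (Ioo p 1) := fun t ht => by simp only [min_eq_left ht.1.le]; ring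
  have hφp : ContinuousAt φ p := hcont.continuousAt (Ioo_mem_nhds hp0 hp1)
  have hleft : ∫ t in Ioo 0 p, φ' t * (min p t - p * t)
      = φ p * ((1 - p) * p + 0) - 0 - (1 - p) * ∫ t in Ioo 0 p, φ t := by
    rw [setIntegral_congr_fun measurableSet_Ioo hkernel_left]
    refine setIntegral_Ioo_deriv_mul_affine _ _ hp0 hs (hcont.mono hleft_sub)
      (fun x hx => hderiv x ⟨hleft_sub hx.1, hx.2⟩) (hint.mono_set hleft_sub)
      ((hint'.mono_set hleft_sub).congr_fun hkernel_left measurableSet_Ioo) ?_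
      ((hφp.mul (by fun_prop)).tendsto.mono_left nhdsWithin_le_nhds)
    convert h0.const_mul (1 - p) using 2 <;> ring
  have hright : ∫ t in Ioo p 1, φ' t * (min p t - p * t)
      = 0 - φ p * (-p * p + p) - -p * ∫ t in Ioo p 1, φ t := by
    rw [setIntegral_congr_fun measurableSet_Ioo hkernel_right]
    refine setIntegral_Ioo_deriv_mul_affine _ _ hp1 hs (hcont.mono hright_sub)
      (fun x hx => hderiv x ⟨hright_sub hx.1, hx.2⟩) (hint.mono_set hright_sub)
      ((hint'.mono_set hright_sub).congr_fun hkernel_right measurableSet_Ioo)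
      ((hφp.mul (by fun_prop)).tendsto.mono_left nhdsWithin_le_nhds) ?_
    convert h1.const_mul p using 2 <;> ring
  rw [← Ioc_union_Ioo_eq_Ioo hp0.le hp1,
    setIntegral_union (Ioc_disjoint_Ioi_same.mono_right Ioo_subset_Ioi_self) measurableSet_Ioo
      (hint'.mono_set (Ioc_subset_Ioo_right hp1)) (hint'.mono_set hright_sub),
    integral_Ioc_eq_integral_Ioo, hleft, hright]
  ring

end

theorem stmt18_general
    (g g' : ℝ → ℝ) (hg : ∀ t ∈ Set.Ioo (0:ℝ) 1, HasDerivAt g (g' t) t)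
    (μ : ℝ) (r : ℕ) (p : ℝ) (hp : p ∈ Set.Ioo (0:ℝ) 1)
    (hint1 : IntegrableOn (fun t => |g t - μ| ^ r) (Set.Ioo (0:ℝ) 1))
    (hint2 : IntegrableOn
      (fun t => (r : ℝ) * |g t - μ| ^ (r - 1) * Real.sign (g t - μ) * g' t
        * (min p t - p * t)) (Set.Ioo (0:ℝ) 1))
    (hb0 : Filter.Tendsto (fun t => t * |g t - μ| ^ r) (nhdsWithin 0 (Set.Ioi 0)) (𝓝 0))
    (hb1 : Filter.Tendsto (fun t => (1 - t) * |g t - μ| ^ r)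
      (nhdsWithin 1 (Set.Iio 1)) (𝓝 0)) :
    ∫ t in Set.Ioo (0:ℝ) 1,
        (r : ℝ) * |g t - μ| ^ (r - 1) * Real.sign (g t - μ) * g' t * (min p t - p * t)
      = p * (∫ t in Set.Ioo p 1, |g t - μ| ^ r)
        - (1 - p) * ∫ t in Set.Ioo (0:ℝ) p, |g t - μ| ^ r := by
  have hcont : ContinuousOn (fun t => |g t - μ| ^ r) (Set.Ioo 0 1) := fun t ht =>
    (((hg t ht).continuousAt.sub continuousAt_const).abs.pow r).continuousWithinAt
  refine setIntegral_deriv_mul_brownianBridgeCov hp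
    (countable_setOf_hasDerivAt_eq_of_ne_zero g g' μ) hcont (fun t ht => ?_) hint1 hint2 hb0 hb1
  have hgt := hg t ht.1
  refine (hgt.sub_const μ).abs_pow ?_ r
  by_contra! h
  exact ht.2 ⟨hgt, sub_eq_zero.1 h.1, h.2⟩

/-- The integration-by-parts identity for the Brownian-bridge covariance kernel used in
the Taylor-expansion proof of Theorem 2.1. -/
theorem stmt18
    (g g' : ℝ → ℝ) (hg : ∀ t ∈ Set.Ioo (0:ℝ) 1, HasDerivAt g (g' t) t)
    (μ : ℝ) (r : ℕ) (hr : 1 ≤ r) (p : ℝ) (hp : p ∈ Set.Ioo (0:ℝ) 1)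
    (hint1 : IntegrableOn (fun t => |g t - μ| ^ r) (Set.Ioo (0:ℝ) 1))
    (hint2 : IntegrableOn
      (fun t => (r : ℝ) * |g t - μ| ^ (r - 1) * Real.sign (g t - μ) * g' t
        * (min p t - p * t)) (Set.Ioo (0:ℝ) 1))
    (hb0 : Filter.Tendsto (fun t => t * |g t - μ| ^ r) (nhdsWithin 0 (Set.Ioi 0)) (𝓝 0))
    (hb1 : Filter.Tendsto (fun t => (1 - t) * |g t - μ| ^ r)
      (nhdsWithin 1 (Set.Iio 1)) (𝓝 0)) :
    ∫ t in Set.Ioo (0:ℝ) 1,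
        (r : ℝ) * |g t - μ| ^ (r - 1) * Real.sign (g t - μ) * g' t * (min p t - p * t)
      = p * (∫ t in Set.Ioo p 1, |g t - μ| ^ r)
        - (1 - p) * ∫ t in Set.Ioo (0:ℝ) p, |g t - μ| ^ r :=
  stmt18_general g g' hg μ r p hp hint1 hint2 hb0 hb1
end
end
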